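/- Let t ∈ Δ_{n-1}, let x be any vertex of Q_n, and let i, i' be even vertices of Q_n. If there exists k < n with t_k = 0 and i_k ≠ i'_k, then the (i,i')-entry of the matrix ρ_t(p_x) is 0. In other words, every matrix ρ_t(p_x) is in t-block diagonal form: it vanishes at all positions (i,i') for which i and i' lie in different connected components of the subgraph of Q_n obtained by deleting, for each k with t_k = 0, all edges of direction k. -/

import Mathlib

open scoped Classical

noncomputable section

/-- Adjacency in the hypercube `Q_n`: differ in exactly one coordinate. -/
def hcAdj {n : ℕ} (x y : Fin n → Bool) : Prop :=
  (Finset.univ.filter (fun k => x k ≠ y k)).card = 1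

/-- Flip the `k`-th coordinate. -/
def hcFlip {n : ℕ} (x : Fin n → Bool) (k : Fin n) : Fin n → Bool :=
  Function.update x k (!x k)

/-- A vertex of `Q_n` is even if it has an even number of coordinates equal to `true`. -/
def hcEven {n : ℕ} (x : Fin n → Bool) : Prop :=
  (Finset.univ.filter (fun k => x k = true)).card % 2 = 0

/-- `hcPar k i` is the number of indices `ℓ ≤ k` with `i ℓ = true` (its parity is
`par_k(i)` from the paper). -/
def hcPar {n : ℕ} (k : Fin n) (i : Fin n → Bool) : ℕ :=
  (Finset.univ.filter (fun ℓ => ℓ ≤ k ∧ i ℓ = true)).card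

/-- For an odd vertex `j`, the vector `ψ_j ∈ ℂ^{U_n}` whose `i`-th entry (for `i` even)
is `(−1)^{par_k(i)} √(t_k)` if `j = i#k` for some `k < n`, and `0` otherwise. -/
def psiT {n : ℕ} (t : Fin n → ℝ) (j : Fin n → Bool) :
    EuclideanSpace ℂ {i : Fin n → Bool // hcEven i} :=
  WithLp.toLp 2 (fun i => ∑ k ∈ Finset.univ.filter (fun k => j = hcFlip i.1 k),
    (-1 : ℂ) ^ hcPar k i.1 * (Real.sqrt (t k) : ℂ))

/-- The representation `ρ_t`: an even vertex `i` is sent to the matrix unit `E_{ii}`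
in `M_{U_n}(ℂ)`, and an odd vertex `j` to the orthogonal projection onto the span of
the unit vector `ψ_j` (the rank-one matrix `ψ_j ψ_j^*`). -/
def rhoT {n : ℕ} (t : Fin n → ℝ) (x : Fin n → Bool) :
    Matrix {i : Fin n → Bool // hcEven i} {i : Fin n → Bool // hcEven i} ℂ :=
  if hcEven x then (fun i i' => if i.1 = x ∧ i'.1 = x then 1 else 0)
  else (fun i i' => psiT t x i * (starRingEnd ℂ) (psiT t x i'))

/-- If the `i`-entry of `ψ_x` is nonzero then `x = i#k` for some `k` with `t k ≠ 0`. -/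
lemma psiT_ne_zero {n : ℕ} (t : Fin n → ℝ) (x : Fin n → Bool)
    (i : {i : Fin n → Bool // hcEven i}) (h : psiT t x i ≠ 0) :
    ∃ k, x = hcFlip i.1 k ∧ t k ≠ 0 := by
  by_contra hc
  push_neg at hc
  apply h
  unfold psiT
  dsimp only
  apply Finset.sum_eq_zero
  intro k hk
  rw [Finset.mem_filter] at hk
  rw [hc k hk.2, Real.sqrt_zero]
  simp

/-- For `t ∈ Δ_{n-1}` and any vertex `x` of `Q_n`, the matrix
`ρ_t(p_x)` is in `t`-block diagonal form: its `(i,i')`-entry vanishes whenever the even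
vertices `i, i'` differ in some coordinate `k` with `t_k = 0` (i.e. whenever `i` and
`i'` lie in different connected components of the subgraph of `Q_n` obtained by
deleting all edges of direction `k` for each `k` with `t_k = 0`). -/
theorem rhoT_block_diagonal {n : ℕ} (hn : 1 ≤ n)
    (t : Fin n → ℝ) (ht0 : ∀ k, 0 ≤ t k) (ht1 : ∑ k, t k = 1)
    (x : Fin n → Bool) (i i' : {i : Fin n → Bool // hcEven i})
    (h : ∃ k, t k = 0 ∧ i.1 k ≠ i'.1 k) :
    rhoT t x i i' = 0 := by
  obtain ⟨k0, htk0, hne⟩ := h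
  unfold rhoT
  split_ifs with hx
  · refine (congrArg (fun M : Matrix _ _ ℂ => M i i') (if_pos hx)).trans ?_
    rw [if_neg]
    rintro ⟨h1, h2⟩
    exact hne (by rw [h1, h2])
  · refine (congrArg (fun M : Matrix _ _ ℂ => M i i') (if_neg hx)).trans ?_
    by_contra hcon
    have hi : psiT t x i ≠ 0 := fun hz => hcon (by rw [hz, zero_mul])
    have hi' : psiT t x i' ≠ 0 := fun hz => hcon (by rw [hz, map_zero, mul_zero])
    obtain ⟨k, hk, htk⟩ := psiT_ne_zero t x i hi
    obtain ⟨k', hk', htk'⟩ := psiT_ne_zero t x i' hi'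
    have hkk0 : k0 ≠ k := fun e => htk (e ▸ htk0)
    have hkk0' : k0 ≠ k' := fun e => htk' (e ▸ htk0)
    have e1 : x k0 = i.1 k0 := by
      rw [hk]; exact Function.update_of_ne hkk0 _ _
    have e2 : x k0 = i'.1 k0 := by
      rw [hk']; exact Function.update_of_ne hkk0' _ _
    exact hne (e1 ▸ e2)
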